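/- Let β > 0 and 2 < p < 6, and define g_β(s) = s^{p/2} + (1−s)^{p/2} + 2β s^{p/4}(1−s)^{p/4} for s ∈ [0,1]. (i) If 2 < p < 4, then there exists s_β ∈ (0,1) such that g_β(s_β) = max_{s ∈ [0,1]} g_β(s) > 1; in particular, if β ≥ (p−2)/2, then one may take s_β = 1/2. (ii) If 4 ≤ p < 6 and β > 2^{(p−2)/2}, then g_β(1/2) = max_{s ∈ [0,1]} g_β(s) > 1. -/

import Mathlib

open MeasureTheory Real Filter Topology

noncomputable section

/-- The underlying space `ℝ³`. -/
abbrev R3 : Type := EuclideanSpace ℝ (Fin 3)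

/-- An element of `H¹(ℝ³)` : a real-valued function in `L²(ℝ³)` together with its
weak gradient, which belongs to `L²(ℝ³; ℝ³)`. -/
structure H1 : Type where
  toFun : R3 → ℝ
  grad : R3 → R3
  memL2 : MemLp toFun 2 (volume : Measure R3)
  grad_memL2 : MemLp grad 2 (volume : Measure R3)
  isWeakGrad : ∀ φ : R3 → ℝ, ContDiff ℝ (⊤ : ℕ∞) φ → HasCompactSupport φ → ∀ i : Fin 3,
    ∫ x, toFun x * fderiv ℝ φ x (EuclideanSpace.single i 1) = - ∫ x, grad x i * φ x

/-- `u ≠ 0` (as an element of `H¹`, i.e. not a.e. zero). -/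
def H1.Nonzero (U : H1) : Prop := ¬ (U.toFun =ᵐ[(volume : Measure R3)] 0)

/-- The pair `(u,v)` is nontrivial, i.e. `(u,v) ≠ (0,0)`. -/
def Nontriv (U V : H1) : Prop :=
  ¬ (U.toFun =ᵐ[(volume : Measure R3)] 0 ∧ V.toFun =ᵐ[(volume : Measure R3)] 0)

/-- `A(u,v) = ∫ (|∇u|² + |∇v|²)`. -/
def Afun (U V : H1) : ℝ := ∫ x, (‖U.grad x‖ ^ 2 + ‖V.grad x‖ ^ 2)

/-- `B` on raw functions. -/
def Bfun (u v : R3 → ℝ) : ℝ :=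
  ∫ x, ∫ y, ((u x) ^ 2 + (v x) ^ 2) * ((u y) ^ 2 + (v y) ^ 2) / ‖x - y‖

/-- `B(u,v)`, the Coulomb (Hartree) double integral. -/
def BH (U V : H1) : ℝ := Bfun U.toFun V.toFun

/-- `C` on raw functions. -/
def Cfun (p β : ℝ) (u v : R3 → ℝ) : ℝ :=
  ∫ x, (|u x| ^ p + |v x| ^ p + 2 * β * |u x| ^ (p / 2) * |v x| ^ (p / 2))

/-- `C(u,v) = ∫ (|u|^p + |v|^p + 2β|u|^{p/2}|v|^{p/2})`. -/
def CH (p β : ℝ) (U V : H1) : ℝ := Cfun p β U.toFun V.toFun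

/-- The energy functional `I_{γ,β}`. -/
def energy (p γ β : ℝ) (U V : H1) : ℝ :=
  (1 / 2) * Afun U V + (γ / 4) * BH U V - (1 / p) * CH p β U V

/-- The total mass `∫ (u² + v²)`. -/
def mass (U V : H1) : ℝ := ∫ x, ((U.toFun x) ^ 2 + (V.toFun x) ^ 2)

/-- The mass constraint set `S_c`. -/
def Sc (c : ℝ) : Set (H1 × H1) := {uv | mass uv.1 uv.2 = c}

/-- `σ_{γ,β}(c) = inf_{S_c} I_{γ,β}`. -/
def sigma (p γ β c : ℝ) : ℝ :=
  sInf ((fun uv : H1 × H1 => energy p γ β uv.1 uv.2) '' Sc c)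

/-- The Riesz potential `φ_{u,v}(x) = ∫ (u(y)² + v(y)²)/|x-y| dy`. -/
def phiFun (U V : H1) (x : R3) : ℝ := ∫ y, ((U.toFun y) ^ 2 + (V.toFun y) ^ 2) / ‖x - y‖

/-- `(u,v)` is a weak solution of the system (HF_λ). -/
def IsWeakSolution (p γ β lam : ℝ) (U V : H1) : Prop :=
  (∀ ψ : R3 → ℝ, ContDiff ℝ (⊤ : ℕ∞) ψ → HasCompactSupport ψ →
    (∫ x, (inner ℝ (U.grad x) (gradient ψ x) : ℝ)) + lam * (∫ x, U.toFun x * ψ x)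
      + γ * (∫ x, phiFun U V x * U.toFun x * ψ x)
    = ∫ x, (|U.toFun x| ^ (p - 2) * U.toFun x
        + β * |V.toFun x| ^ (p / 2) * |U.toFun x| ^ (p / 2 - 2) * U.toFun x) * ψ x) ∧
  (∀ ψ : R3 → ℝ, ContDiff ℝ (⊤ : ℕ∞) ψ → HasCompactSupport ψ →
    (∫ x, (inner ℝ (V.grad x) (gradient ψ x) : ℝ)) + lam * (∫ x, V.toFun x * ψ x)
      + γ * (∫ x, phiFun U V x * V.toFun x * ψ x)
    = ∫ x, (|V.toFun x| ^ (p - 2) * V.toFun x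
        + β * |U.toFun x| ^ (p / 2) * |V.toFun x| ^ (p / 2 - 2) * V.toFun x) * ψ x)

/-- The Pohozaev functional `P_{γ,β}`. -/
def Pfun (p γ β : ℝ) (U V : H1) : ℝ :=
  Afun U V + (γ / 4) * BH U V - (3 * (p - 2) / (2 * p)) * CH p β U V

/-- The Pohozaev manifold `M_{γ,β}(c)`. -/
def MSet (p γ β c : ℝ) : Set (H1 × H1) :=
  {uv | uv ∈ Sc c ∧ Pfun p γ β uv.1 uv.2 = 0}

/-- `m_{γ,β}(c) = inf_{M_{γ,β}(c)} I_{γ,β}`. -/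
def mPoho (p γ β c : ℝ) : ℝ :=
  sInf ((fun uv : H1 × H1 => energy p γ β uv.1 uv.2) '' MSet p γ β c)

/-- `R_p(u,v)`. -/
def Rp (p γ β : ℝ) (U V : H1) : ℝ :=
  ((Afun U V) ^ (3 * p - 8) * (γ * BH U V) ^ (10 - 3 * p) / (CH p β U V) ^ (2 : ℝ))
    ^ (1 / (4 * (p - 3)))

/-- `c_* = (5/3)^{3/2} inf_{S_1} R_{10/3}`. -/
def cLow (γ β : ℝ) : ℝ :=
  ((5 : ℝ) / 3) ^ ((3 : ℝ) / 2) *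
    sInf ((fun uv : H1 × H1 => Rp (10 / 3) γ β uv.1 uv.2) '' Sc 1)

/-- `c^*`. -/
def cUp (p γ β : ℝ) : ℝ :=
  (2 * (6 - p) / (5 * p - 12)) ^ ((3 * p - 10) / (4 * (p - 3))) *
    (3 * p / (5 * p - 12)) ^ (1 / (2 * (p - 3))) *
    sInf ((fun uv : H1 × H1 => Rp p γ β uv.1 uv.2) '' Sc 1)

/-- `β⋆(c,γ,p)`. -/
def betaStar (p γ c : ℝ) : ℝ :=
  sInf { r : ℝ | ∃ U V : H1,
    0 < (∫ x, |U.toFun x| ^ (p / 2) * |V.toFun x| ^ (p / 2)) ∧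
    r = ((p / (3 * p - 8)) * ((γ * (3 * p - 8)) / (2 * (10 - 3 * p))) ^ ((10 - 3 * p) / 2)
          * c ^ (-(2 * (p - 3)))
          * (Afun U V) ^ ((3 * p - 8) / 2) * (BH U V) ^ ((10 - 3 * p) / 2)
          * (mass U V) ^ (2 * (p - 3))
        - (∫ x, (|U.toFun x| ^ p + |V.toFun x| ^ p)))
        / (2 * ∫ x, |U.toFun x| ^ (p / 2) * |V.toFun x| ^ (p / 2)) }

/-- The action functional `E_{λ,γ,β}`. -/
def actionE (p γ β lam : ℝ) (U V : H1) : ℝ :=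
  energy p γ β U V + (lam / 2) * mass U V

/-- `(u,v)` is an action ground state of (HF_λ). -/
def IsActionGS (p γ β lam : ℝ) (U V : H1) : Prop :=
  IsWeakSolution p γ β lam U V ∧ Nontriv U V ∧
  ∀ W Z : H1, IsWeakSolution p γ β lam W Z → Nontriv W Z →
    actionE p γ β lam U V ≤ actionE p γ β lam W Z

/-- A function on `ℝ³` is (a.e.) radially symmetric. -/
def IsRadialAE (f : R3 → ℝ) : Prop :=
  ∃ g : ℝ → ℝ, ∀ᵐ x ∂(volume : Measure R3), f x = g ‖x‖


/-- The function `g_β(s) = s^{p/2} + (1−s)^{p/2} + 2β s^{p/4}(1−s)^{p/4}`. -/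
def gfun (β p s : ℝ) : ℝ := s ^ (p / 2) + (1 - s) ^ (p / 2) + 2 * β * s ^ (p / 4) * (1 - s) ^ (p / 4)

private lemma sinh_mul_le {q : ℝ} (hq0 : 0 ≤ q) (hq1 : q ≤ 1) {c : ℝ} (hc : 0 ≤ c) :
    Real.sinh (q * c) ≤ q * Real.sinh c := by
  have hmono : MonotoneOn (fun c => q * Real.sinh c - Real.sinh (q * c)) (Set.Ici (0:ℝ)) := by
    apply monotoneOn_of_deriv_nonneg (convex_Ici 0)
    · exact ((continuous_const.mul Real.continuous_sinh).sub
        (Real.continuous_sinh.comp (continuous_const.mul continuous_id))).continuousOn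
    · exact ((Real.differentiable_sinh.const_mul q).sub
        (Real.differentiable_sinh.comp (differentiable_id.const_mul q))).differentiableOn
    · intro x hx
      rw [interior_Ici, Set.mem_Ioi] at hx
      have hlin : HasDerivAt (fun y : ℝ => q * y) q x := by
        simpa using (hasDerivAt_id x).const_mul q
      have h2 : HasDerivAt (fun y : ℝ => Real.sinh (q * y)) (Real.cosh (q * x) * q) x :=
        (Real.hasDerivAt_sinh (q * x)).comp x hlin
      have h1 : HasDerivAt (fun c : ℝ => q * Real.sinh c - Real.sinh (q * c))
          (q * Real.cosh x - Real.cosh (q * x) * q) x :=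
        ((Real.hasDerivAt_sinh x).const_mul q).sub h2
      rw [h1.deriv]
      have hcc : Real.cosh (q * x) ≤ Real.cosh x := by
        rw [Real.cosh_le_cosh]
        rw [abs_of_nonneg (mul_nonneg hq0 (le_of_lt hx)), abs_of_nonneg (le_of_lt hx)]
        nlinarith [le_of_lt hx]
      nlinarith
  have h0 : (0:ℝ) ∈ Set.Ici (0:ℝ) := Set.self_mem_Ici
  have := hmono h0 (Set.mem_Ici.2 hc) hc
  simp only [mul_zero, Real.sinh_zero, sub_zero] at this
  linarith

private lemma exp_core {q b d : ℝ} (hq0 : 0 ≤ q) (hq1 : q ≤ 1) (hb : q ≤ b) (hd : 0 ≤ d) :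
    Real.exp (q * d) - Real.exp (-(q * d)) ≤ b * (Real.exp d - Real.exp (-d)) := by
  have h1 := sinh_mul_le hq0 hq1 hd
  have h2 : 0 ≤ Real.sinh d := by rw [← Real.sinh_zero]; exact Real.sinh_le_sinh.2 hd
  have e1 : Real.sinh (q * d) = (Real.exp (q*d) - Real.exp (-(q*d))) / 2 := Real.sinh_eq _
  have e2 : Real.sinh d = (Real.exp d - Real.exp (-d)) / 2 := Real.sinh_eq _
  nlinarith [h1, h2, hb]

private lemma exp_core2 {q b u v : ℝ} (hq0 : 0 ≤ q) (hq1 : q ≤ 1) (hb : q ≤ b) (huv : v ≤ u) :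
    Real.exp (u * q) - Real.exp (v * q) ≤
      b * (Real.exp ((u + v) * ((q - 1) / 2)) * (Real.exp u - Real.exp v)) := by
  have hd : (0:ℝ) ≤ (u - v) / 2 := by linarith
  have key := exp_core hq0 hq1 hb hd
  have E := Real.exp_pos ((u + v) / 2 * q)
  have e1 : Real.exp (u * q) = Real.exp ((u + v) / 2 * q) * Real.exp (q * ((u - v) / 2)) := by
    rw [← Real.exp_add]; ring_nf
  have e2 : Real.exp (v * q) = Real.exp ((u + v) / 2 * q) * Real.exp (-(q * ((u - v) / 2))) := by
    rw [← Real.exp_add]; ring_nf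
  have e3 : Real.exp ((u + v) * ((q - 1) / 2)) * (Real.exp u - Real.exp v) =
      Real.exp ((u + v) / 2 * q) * (Real.exp ((u - v) / 2) - Real.exp (-((u - v) / 2))) := by
    rw [mul_sub, mul_sub, ← Real.exp_add, ← Real.exp_add, ← Real.exp_add, ← Real.exp_add]
    ring_nf
  rw [e1, e2, e3]
  calc Real.exp ((u + v) / 2 * q) * Real.exp (q * ((u - v) / 2)) -
        Real.exp ((u + v) / 2 * q) * Real.exp (-(q * ((u - v) / 2)))
      = Real.exp ((u + v) / 2 * q) *
          (Real.exp (q * ((u - v) / 2)) - Real.exp (-(q * ((u - v) / 2)))) := by ring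
    _ ≤ Real.exp ((u + v) / 2 * q) *
          (b * (Real.exp ((u - v) / 2) - Real.exp (-((u - v) / 2)))) :=
        mul_le_mul_of_nonneg_left key E.le
    _ = b * (Real.exp ((u + v) / 2 * q) *
          (Real.exp ((u - v) / 2) - Real.exp (-((u - v) / 2)))) := by ring

private lemma rpow_diff_le {q b A B : ℝ} (hq0 : 0 < q) (hq1 : q ≤ 1) (hb : q ≤ b)
    (hB : 0 < B) (hBA : B ≤ A) :
    A ^ q - B ^ q ≤ b * ((A * B) ^ ((q - 1) / 2) * (A - B)) := by
  have hA : 0 < A := lt_of_lt_of_le hB hBA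
  have hlog : Real.log B ≤ Real.log A := Real.log_le_log hB hBA
  have key := exp_core2 hq0.le hq1 hb hlog
  rw [Real.exp_log hA, Real.exp_log hB] at key
  rw [Real.rpow_def_of_pos hA, Real.rpow_def_of_pos hB,
    Real.rpow_def_of_pos (mul_pos hA hB), Real.log_mul hA.ne' hB.ne']
  exact key

private lemma gfun_hasDerivAt (β p : ℝ) {s : ℝ} (hs : 0 < s) (hs1 : s < 1) :
    HasDerivAt (gfun β p)
      ((p / 2) * s ^ (p / 2 - 1) + (-1 * (p / 2) * (1 - s) ^ (p / 2 - 1)) +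
        ((2 * β * ((p / 4) * s ^ (p / 4 - 1))) * (1 - s) ^ (p / 4) +
          (2 * β * s ^ (p / 4)) * (-1 * (p / 4) * (1 - s) ^ (p / 4 - 1)))) s := by
  have hs1' : (1:ℝ) - s ≠ 0 := by intro h; nlinarith [h]
  have hone : HasDerivAt (fun y : ℝ => 1 - y) (-1) s := by
    simpa using (hasDerivAt_id s).const_sub 1
  have hd1 : HasDerivAt (fun y : ℝ => y ^ (p / 2)) ((p / 2) * s ^ (p / 2 - 1)) s :=
    Real.hasDerivAt_rpow_const (Or.inl hs.ne')
  have hd2 : HasDerivAt (fun y : ℝ => (1 - y) ^ (p / 2)) (-1 * (p / 2) * (1 - s) ^ (p / 2 - 1)) s :=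
    hone.rpow_const (Or.inl hs1')
  have hd3 : HasDerivAt (fun y : ℝ => y ^ (p / 4)) ((p / 4) * s ^ (p / 4 - 1)) s :=
    Real.hasDerivAt_rpow_const (Or.inl hs.ne')
  have hd4 : HasDerivAt (fun y : ℝ => (1 - y) ^ (p / 4)) (-1 * (p / 4) * (1 - s) ^ (p / 4 - 1)) s :=
    hone.rpow_const (Or.inl hs1')
  have hprod : HasDerivAt (fun y : ℝ => 2 * β * y ^ (p / 4) * (1 - y) ^ (p / 4))
      ((2 * β * ((p / 4) * s ^ (p / 4 - 1))) * (1 - s) ^ (p / 4) +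
        (2 * β * s ^ (p / 4)) * (-1 * (p / 4) * (1 - s) ^ (p / 4 - 1))) s :=
    (hd3.const_mul (2 * β)).mul hd4
  exact ((hd1.add hd2).add hprod : _)

private lemma gfun_anti {β p : ℝ} (hp1 : 2 < p) (hp4 : p < 4) (hbq : (p - 2) / 2 ≤ β) :
    AntitoneOn (gfun β p) (Set.Icc (1 / 2 : ℝ) 1) := by
  have hcont : ContinuousOn (gfun β p) (Set.Icc (1 / 2 : ℝ) 1) := by
    have c1 : Continuous fun s : ℝ => s ^ (p / 2) := by
      rw [continuous_iff_continuousAt]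
      exact fun x => Real.continuousAt_rpow_const x (p / 2) (Or.inr (by linarith))
    have c2 : Continuous fun s : ℝ => s ^ (p / 4) := by
      rw [continuous_iff_continuousAt]
      exact fun x => Real.continuousAt_rpow_const x (p / 4) (Or.inr (by linarith))
    have cs : Continuous fun s : ℝ => 1 - s := continuous_const.sub continuous_id
    exact (((c1.comp continuous_id).add (c1.comp cs)).add
      (((continuous_const.mul (c2.comp continuous_id))).mul (c2.comp cs))).continuousOn
  apply antitoneOn_of_deriv_nonpos (convex_Icc _ _) hcont
  · rw [interior_Icc]
    intro x hx
    exact (gfun_hasDerivAt β p (by linarith [hx.1] : (0:ℝ) < x) hx.2).differentiableAt.differentiableWithinAt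
  · rw [interior_Icc]
    intro x hx
    obtain ⟨hx1, hx2⟩ := hx
    have hx0 : (0:ℝ) < x := by linarith
    have hB0 : (0:ℝ) < 1 - x := by linarith
    rw [(gfun_hasDerivAt β p hx0 hx2).deriv]
    -- rewrite products
    have e1 : x ^ (p / 4) = x ^ (p / 4 - 1) * x := by
      rw [← Real.rpow_add_one hx0.ne' (p / 4 - 1)]; ring_nf
    have e2 : (1 - x) ^ (p / 4) = (1 - x) ^ (p / 4 - 1) * (1 - x) := by
      rw [← Real.rpow_add_one hB0.ne' (p / 4 - 1)]; ring_nf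
    have e3 : x ^ (p / 4 - 1) * (1 - x) ^ (p / 4 - 1) = (x * (1 - x)) ^ (p / 4 - 1) :=
      (Real.mul_rpow hx0.le hB0.le).symm
    have key := rpow_diff_le (q := p / 2 - 1) (b := β) (A := x) (B := 1 - x)
      (by linarith) (by linarith) (by linarith) hB0 (by linarith)
    have eexp : (p / 2 - 1 - 1) / 2 = p / 4 - 1 := by ring
    rw [eexp] at key
    have main : p / 2 * x ^ (p / 2 - 1) + -1 * (p / 2) * (1 - x) ^ (p / 2 - 1) +
        (2 * β * (p / 4 * x ^ (p / 4 - 1)) * ((1 - x) ^ (p / 4 - 1) * (1 - x)) +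
          2 * β * (x ^ (p / 4 - 1) * x) * (-1 * (p / 4) * (1 - x) ^ (p / 4 - 1))) =
        p / 2 * ((x ^ (p / 2 - 1) - (1 - x) ^ (p / 2 - 1)) -
          β * (x ^ (p / 4 - 1) * (1 - x) ^ (p / 4 - 1) * (x - (1 - x)))) := by ring
    rw [e1, e2, main, e3]
    exact mul_nonpos_of_nonneg_of_nonpos (by linarith) (by linarith [key])

private lemma gfun_symm (β p t : ℝ) : gfun β p (1 - t) = gfun β p t := by
  rw [gfun, gfun]
  have h : (1:ℝ) - (1 - t) = t := by ring
  rw [h]; ring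

private lemma gfun_half (β p : ℝ) : gfun β p (1 / 2) = (2 + 2 * β) * (1 / 2 : ℝ) ^ (p / 2) := by
  rw [gfun]
  have h : (1:ℝ) - 1 / 2 = 1 / 2 := by norm_num
  rw [h, mul_assoc (2 * β)]
  have h2 : (1 / 2 : ℝ) ^ (p / 4) * (1 / 2 : ℝ) ^ (p / 4) = (1 / 2 : ℝ) ^ (p / 2) := by
    rw [← Real.rpow_add (by norm_num : (0:ℝ) < 1 / 2)]; ring_nf
  rw [h2]; ring

private lemma gfun_half_gt_one {β p : ℝ} (h : (2:ℝ) ^ (p / 2) < 2 + 2 * β) :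
    1 < gfun β p (1 / 2) := by
  rw [gfun_half]
  have h2 : (0:ℝ) < (2:ℝ) ^ (p / 2) := Real.rpow_pos_of_pos two_pos _
  have e : (1 / 2 : ℝ) ^ (p / 2) = ((2:ℝ) ^ (p / 2))⁻¹ := by
    rw [show (1 / 2 : ℝ) = 2⁻¹ by norm_num, Real.inv_rpow (by norm_num : (0:ℝ) ≤ 2)]
  rw [e, lt_mul_inv_iff₀ h2, one_mul]
  exact h

private lemma gfun_zero {β p : ℝ} (hp : 0 < p) : gfun β p 0 = 1 := by
  rw [gfun]
  rw [Real.zero_rpow (by positivity : p / 2 ≠ 0), Real.zero_rpow (by positivity : p / 4 ≠ 0)]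
  norm_num

private lemma gfun_one {β p : ℝ} (hp : 0 < p) : gfun β p 1 = 1 := by
  rw [← gfun_symm, show (1:ℝ) - 1 = 0 by ring, gfun_zero hp]

private lemma two_rpow_lt_one_add {x : ℝ} (hx0 : 0 < x) (hx1 : x < 1) : (2:ℝ) ^ x < 1 + x := by
  have hlog : (0:ℝ) < Real.log 2 := Real.log_pos (by norm_num)
  have key := strictConvexOn_exp.2 (Set.mem_univ (0:ℝ)) (Set.mem_univ (Real.log 2))
    (ne_of_lt hlog) (by linarith : (0:ℝ) < 1 - x) hx0 (by ring)
  simp only [smul_eq_mul, mul_zero, zero_add, Real.exp_zero, Real.exp_log two_pos] at key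
  rw [Real.rpow_def_of_pos two_pos, mul_comm]
  linarith

private lemma exists_small_gt_one {β p : ℝ} (hβ : 0 < β) (hp1 : 2 < p) (hp4 : p < 4) :
    ∃ s : ℝ, s ∈ Set.Ioo (0:ℝ) 1 ∧ 1 < gfun β p s := by
  have hp0 : (0:ℝ) < p := by linarith
  set e₀ : ℝ := 1 - p / 4 with he₀def
  have he₀ : 0 < e₀ := by rw [he₀def]; linarith
  set c : ℝ := (β / p) ^ (1 / e₀) with hcdef
  have hc : 0 < c := Real.rpow_pos_of_pos (div_pos hβ hp0) _
  set s : ℝ := min (1 / 2) c with hsdef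
  have hs0 : 0 < s := lt_min (by norm_num) hc
  have hs12 : s ≤ 1 / 2 := min_le_left _ _
  have hs1 : s < 1 := lt_of_le_of_lt hs12 (by norm_num)
  refine ⟨s, ⟨hs0, hs1⟩, ?_⟩
  -- key1 : s ^ e₀ ≤ β / p
  have key1 : s ^ e₀ ≤ β / p := by
    have h1 : s ^ e₀ ≤ c ^ e₀ := Real.rpow_le_rpow hs0.le (min_le_right _ _) he₀.le
    have h2 : c ^ e₀ = β / p := by
      rw [hcdef, ← Real.rpow_mul (div_pos hβ hp0).le, one_div, inv_mul_cancel₀ he₀.ne',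
        Real.rpow_one]
    linarith
  -- Bernoulli : 1 - (p/2) * s ≤ (1-s)^(p/2)
  have bern : 1 - p / 2 * s ≤ (1 - s) ^ (p / 2) := by
    have := one_add_mul_self_le_rpow_one_add (s := -s) (by linarith) (p := p / 2) (by linarith)
    rw [show (1:ℝ) + -s = 1 - s by ring] at this
    linarith
  -- (1-s)^(p/4) ≥ 1/2
  have half_le : (1 / 2 : ℝ) ≤ (1 - s) ^ (p / 4) := by
    have h1 : (1 / 2 : ℝ) ^ (1:ℝ) ≤ (1 / 2 : ℝ) ^ (p / 4) :=
      Real.rpow_le_rpow_of_exponent_ge (by norm_num) (by norm_num) (by linarith)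
    have h2 : (1 / 2 : ℝ) ^ (p / 4) ≤ (1 - s) ^ (p / 4) :=
      Real.rpow_le_rpow (by norm_num) (by linarith) (by linarith)
    rw [Real.rpow_one] at h1
    linarith
  -- β * s^(p/4) > (p/2) * s
  have hsp4 : 0 < s ^ (p / 4) := Real.rpow_pos_of_pos hs0 _
  have split : s = s ^ (p / 4) * s ^ e₀ := by
    rw [← Real.rpow_add hs0, he₀def, show p / 4 + (1 - p / 4) = 1 by ring, Real.rpow_one]
  have prod_gt : p / 2 * s < β * s ^ (p / 4) := by
    have h1 : p / 2 * s = p / 2 * s ^ e₀ * s ^ (p / 4) := by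
      nth_rewrite 1 [split]; ring
    have h2 : p / 2 * s ^ e₀ ≤ p / 2 * (β / p) := by
      exact mul_le_mul_of_nonneg_left key1 (by linarith)
    have h3 : p / 2 * (β / p) = β / 2 := by field_simp
    have h4 : p / 2 * s ^ e₀ * s ^ (p / 4) ≤ β / 2 * s ^ (p / 4) := by
      apply mul_le_mul_of_nonneg_right _ hsp4.le
      rw [← h3]; exact h2
    have h5 : β / 2 * s ^ (p / 4) < β * s ^ (p / 4) := by nlinarith
    linarith
  -- product term ≥ β * s^(p/4)
  have prod_ge : β * s ^ (p / 4) ≤ 2 * β * s ^ (p / 4) * (1 - s) ^ (p / 4) := by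
    have := mul_le_mul_of_nonneg_left half_le (by positivity : (0:ℝ) ≤ 2 * β * s ^ (p / 4))
    calc β * s ^ (p / 4) = 2 * β * s ^ (p / 4) * (1 / 2) := by ring
      _ ≤ 2 * β * s ^ (p / 4) * (1 - s) ^ (p / 4) := this
  have hsn : 0 ≤ s ^ (p / 2) := Real.rpow_nonneg hs0.le _
  rw [gfun]
  linarith

private lemma rpow_interp {X r : ℝ} (hX : 0 ≤ X) (h2 : 2 ≤ r) (h3 : r ≤ 3) :
    X ^ r ≤ (3 - r) * X ^ (2:ℕ) + (r - 2) * X ^ (3:ℕ) := by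
  rcases eq_or_lt_of_le hX with h0 | hXpos
  · rw [← h0, Real.zero_rpow (by linarith : r ≠ 0)]
    norm_num
  have key := Real.geom_mean_le_arith_mean2_weighted (w₁ := 3 - r) (w₂ := r - 2)
    (p₁ := X ^ (2:ℕ)) (p₂ := X ^ (3:ℕ)) (by linarith) (by linarith) (by positivity)
    (by positivity) (by ring)
  have e : (X ^ (2:ℕ) : ℝ) ^ (3 - r) * (X ^ (3:ℕ) : ℝ) ^ (r - 2) = X ^ r := by
    rw [← Real.rpow_natCast X 2, ← Real.rpow_natCast X 3, ← Real.rpow_mul hX,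
      ← Real.rpow_mul hX, ← Real.rpow_add hXpos]
    congr 1
    push_cast; ring
  rw [e] at key
  exact key

private lemma beta_ge_sub {p β : ℝ} (hp4 : 4 ≤ p) (hp6 : p < 6)
    (hβ2 : (2:ℝ) ^ ((p - 2) / 2) < β) : p - 3 ≤ β := by
  have hlog2 : (0.6931471803 : ℝ) < Real.log 2 := Real.log_two_gt_d9
  have hlog2' : Real.log 2 < 0.6931471808 := Real.log_two_lt_d9
  set x : ℝ := (p - 2) / 2 with hx
  have hx1 : 1 ≤ x := by rw [hx]; linarith
  have hx2 : x < 2 := by rw [hx]; linarith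
  have e : (2:ℝ) ^ x = 2 * Real.exp ((x - 1) * Real.log 2) := by
    calc (2:ℝ) ^ x = Real.exp (Real.log 2 * x) := Real.rpow_def_of_pos two_pos x
      _ = Real.exp (Real.log 2 + (x - 1) * Real.log 2) := by ring_nf
      _ = Real.exp (Real.log 2) * Real.exp ((x - 1) * Real.log 2) := Real.exp_add _ _
      _ = 2 * Real.exp ((x - 1) * Real.log 2) := by rw [Real.exp_log two_pos]
  have bern : (x - 1) * Real.log 2 + 1 ≤ Real.exp ((x - 1) * Real.log 2) :=
    Real.add_one_le_exp _
  have hprod : (x - 1) * (1 - Real.log 2) ≤ 1 * (1 - Real.log 2) :=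
    mul_le_mul_of_nonneg_right (by linarith) (by linarith)
  have : p - 3 ≤ (2:ℝ) ^ x := by
    rw [e]
    nlinarith [hprod, bern]
  linarith

private lemma case2_max {β p : ℝ} (hβ0 : 0 ≤ β) (hp4 : 4 ≤ p) (hp6 : p < 6) (hβ : p - 3 ≤ β) :
    ∀ t ∈ Set.Icc (0:ℝ) 1, gfun β p t ≤ gfun β p (1 / 2) := by
  intro t ht
  obtain ⟨ht0, ht1⟩ := ht
  have ht1' : (0:ℝ) ≤ 1 - t := by linarith
  have h2p : (0:ℝ) < (2:ℝ) ^ (p / 2) := Real.rpow_pos_of_pos two_pos _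
  apply le_of_mul_le_mul_left _ h2p
  have hone : (2:ℝ) ^ (p / 2) * (1 / 2 : ℝ) ^ (p / 2) = 1 := by
    rw [← Real.mul_rpow (by norm_num) (by norm_num)]
    norm_num
  have hRHS : (2:ℝ) ^ (p / 2) * gfun β p (1 / 2) = 2 + 2 * β := by
    rw [gfun_half, show (2:ℝ) ^ (p/2) * ((2 + 2*β) * (1/2:ℝ) ^ (p/2)) =
      (2 + 2*β) * ((2:ℝ) ^ (p/2) * (1/2:ℝ) ^ (p/2)) from by ring, hone, mul_one]
  have eX : (2:ℝ) ^ (p / 2) * t ^ (p / 2) = (2 * t) ^ (p / 2) :=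
    (Real.mul_rpow (by norm_num) ht0).symm
  have eY : (2:ℝ) ^ (p / 2) * (1 - t) ^ (p / 2) = (2 - 2 * t) ^ (p / 2) := by
    rw [show (2:ℝ) - 2 * t = 2 * (1 - t) by ring]
    exact (Real.mul_rpow (by norm_num) ht1').symm
  have eP : (2:ℝ) ^ (p / 2) * (t ^ (p / 4) * (1 - t) ^ (p / 4)) =
      (2 * t) ^ (p / 4) * (2 - 2 * t) ^ (p / 4) := by
    rw [show (2:ℝ) ^ (p / 2) = (2:ℝ) ^ (p / 4) * (2:ℝ) ^ (p / 4) from by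
      rw [← Real.rpow_add two_pos]; ring_nf]
    rw [show (2:ℝ) - 2 * t = 2 * (1 - t) by ring,
      Real.mul_rpow (by norm_num : (0:ℝ) ≤ 2) ht0,
      Real.mul_rpow (by norm_num : (0:ℝ) ≤ 2) ht1']
    ring
  have e3 : (2:ℝ) ^ (p / 2) * (2 * β * t ^ (p / 4) * (1 - t) ^ (p / 4)) =
      2 * β * ((2 * t) ^ (p / 4) * (2 - 2 * t) ^ (p / 4)) := by
    rw [← eP]; ring
  rw [hRHS, gfun, mul_add, mul_add, eX, eY, e3]
  -- now pure inequality in X = 2t, Y = 2-2t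
  have hX0 : (0:ℝ) ≤ 2 * t := by linarith
  have hY0 : (0:ℝ) ≤ 2 - 2 * t := by linarith
  have hA := rpow_interp hX0 (by linarith : (2:ℝ) ≤ p / 2) (by linarith : p / 2 ≤ 3)
  have hB := rpow_interp hY0 (by linarith : (2:ℝ) ≤ p / 2) (by linarith : p / 2 ≤ 3)
  have hP : (2 * t) ^ (p / 4) * (2 - 2 * t) ^ (p / 4) ≤ 2 * t * (2 - 2 * t) := by
    rw [← Real.mul_rpow hX0 hY0]
    rcases eq_or_lt_of_le (mul_nonneg hX0 hY0) with h0 | hpos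
    · rw [← h0, Real.zero_rpow (by positivity : p / 4 ≠ 0)]
    · have h1 : (2 * t) * (2 - 2 * t) ≤ 1 := by nlinarith [sq_nonneg (2 * t - 1)]
      have := Real.rpow_le_rpow_of_exponent_ge hpos h1 (by linarith : (1:ℝ) ≤ p / 4)
      rwa [Real.rpow_one] at this
  have h2β : 2 * β * ((2 * t) ^ (p / 4) * (2 - 2 * t) ^ (p / 4)) ≤
      2 * β * (2 * t * (2 - 2 * t)) := mul_le_mul_of_nonneg_left hP (by positivity)
  have hkey : (0:ℝ) ≤ (2 * β - (2 * p - 6)) * (1 - 4 * t * (1 - t)) :=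
    mul_nonneg (by linarith) (by nlinarith [sq_nonneg (2 * t - 1)])
  nlinarith [hA, hB, h2β, hkey]


private lemma gfun_cont {β p : ℝ} (hp : 0 < p) : Continuous (gfun β p) := by
  have c1 : Continuous fun s : ℝ => s ^ (p / 2) := by
    rw [continuous_iff_continuousAt]
    exact fun x => Real.continuousAt_rpow_const x (p / 2) (Or.inr (by linarith))
  have c2 : Continuous fun s : ℝ => s ^ (p / 4) := by
    rw [continuous_iff_continuousAt]
    exact fun x => Real.continuousAt_rpow_const x (p / 4) (Or.inr (by linarith))
  have cs : Continuous fun s : ℝ => 1 - s := continuous_const.sub continuous_id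
  exact (((c1.comp continuous_id).add (c1.comp cs)).add
    (((continuous_const.mul (c2.comp continuous_id))).mul (c2.comp cs)))

/-- Let `β > 0` and `2 < p < 6`. (i) If `p < 4` there is `s_β ∈ (0,1)` at which
`g_β` attains its maximum over `[0,1]`, with `g_β(s_β) > 1`; if moreover `β ≥ (p−2)/2` one may
take `s_β = 1/2`. (ii) If `4 ≤ p` and `β > 2^{(p−2)/2}`, then `g_β` attains its maximum over
`[0,1]` at `1/2` and `g_β(1/2) > 1`. -/
theorem statement9 (p β : ℝ) (hβ : 0 < β) (hp1 : 2 < p) (hp2 : p < 6) :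
    (p < 4 → ∃ s : ℝ, s ∈ Set.Ioo (0 : ℝ) 1 ∧
      (∀ t ∈ Set.Icc (0 : ℝ) 1, gfun β p t ≤ gfun β p s) ∧ 1 < gfun β p s ∧
      ((p - 2) / 2 ≤ β → s = 1 / 2)) ∧
    (4 ≤ p → (2 : ℝ) ^ ((p - 2) / 2) < β →
      (∀ t ∈ Set.Icc (0 : ℝ) 1, gfun β p t ≤ gfun β p (1 / 2)) ∧ 1 < gfun β p (1 / 2)) := by
  have e2 : (2:ℝ) ^ (p / 2) = 2 * (2:ℝ) ^ ((p - 2) / 2) := by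
    rw [show p / 2 = 1 + (p - 2) / 2 by ring, Real.rpow_add two_pos, Real.rpow_one]
  constructor
  · intro hp4
    by_cases hbq : (p - 2) / 2 ≤ β
    · refine ⟨1 / 2, by norm_num, ?_, ?_, fun _ => rfl⟩
      · have anti := gfun_anti hp1 hp4 hbq
        have h12 : (1 / 2 : ℝ) ∈ Set.Icc (1 / 2 : ℝ) 1 := by norm_num
        intro t ht
        rcases le_or_gt t (1 / 2) with h | h
        · rw [← gfun_symm β p t]
          exact anti h12 ⟨by linarith, by linarith [ht.1]⟩ (by linarith)
        · exact anti h12 ⟨h.le, ht.2⟩ h.le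
      · apply gfun_half_gt_one
        have h1 := two_rpow_lt_one_add (x := (p - 2) / 2) (by linarith) (by linarith)
        rw [e2]; linarith
    · obtain ⟨s1, hs1, hgs1⟩ := exists_small_gt_one hβ hp1 hp4
      obtain ⟨s0, hs0mem, hmax⟩ := isCompact_Icc.exists_isMaxOn
        (Set.nonempty_Icc.2 (by norm_num : (0:ℝ) ≤ 1))
        ((gfun_cont (by linarith : (0:ℝ) < p)).continuousOn)
      have hmax' : ∀ t ∈ Set.Icc (0:ℝ) 1, gfun β p t ≤ gfun β p s0 :=
        fun t ht => isMaxOn_iff.mp hmax t ht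
      have hgt : 1 < gfun β p s0 :=
        lt_of_lt_of_le hgs1 (hmax' s1 ⟨hs1.1.le, hs1.2.le⟩)
      refine ⟨s0, ⟨?_, ?_⟩, hmax', hgt, fun hc => absurd hc hbq⟩
      · rcases eq_or_lt_of_le hs0mem.1 with h | h
        · rw [← h, gfun_zero (by linarith : (0:ℝ) < p)] at hgt; linarith
        · exact h
      · rcases eq_or_lt_of_le hs0mem.2 with h | h
        · rw [h, gfun_one (by linarith : (0:ℝ) < p)] at hgt; linarith
        · exact h
  · intro hp4 hβ2
    have hβ' : p - 3 ≤ β := beta_ge_sub hp4 hp2 hβ2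
    refine ⟨case2_max hβ.le hp4 hp2 hβ', ?_⟩
    apply gfun_half_gt_one
    rw [e2]; linarith

end
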